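/- For any orthonormal vectors e_1,…,e_n ∈ H, Σ_{i=1}^n ∫_X ⟨e_i, Φ(x)⟩² dρ(x) ≤ Σ_{l=1}^n λ_l. That is, the total L²(ρ)-mass of the functions x ↦ ⟨e_i, Φ(x)⟩ associated with any n orthonormal elements of H is at most the sum of the n largest eigenvalues of the kernel integral operator. -/

import Mathlib

/-!
Put `g l = ∫ ψ l • Φ dρ ∈ H`. The eigen-equations give `⟪Φ x, g l⟫ = λ l ψ l x` and make the
`g l` pairwise orthogonal with `‖g l‖² = λ l`, so `∑_{l<N} ψ l x • g l` is the orthogonal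
projection of `Φ x` onto `span {g l | l < N}`; its squared norm `∑_{l<N} λ l * ψ l x ^ 2` tends to
`k(x, x) = ‖Φ x‖²` by Mercer, hence the projections converge to `Φ x`. Dominated convergence and the
orthonormality of the `ψ l` then give `∫ ⟪u, Φ x⟫² dρ = ∑ l, ⟪u, g l⟫²` for every `u ∈ H`.
Summed over the `e i`, this is `∑ l, λ l b l` with `b l = ∑ i ⟪e i, g l⟫² / λ l`; Bessel's
inequality for the `e i` gives `b l ≤ 1`, and for the normalised `g l` it gives `∑ l, b l ≤ n`,
so the sum is at most `λ 0 + ⋯ + λ (n - 1)` because `λ` is nonincreasing.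
-/

open MeasureTheory Filter Finset
open scoped RealInnerProductSpace Topology

lemma sum_range_mul_le_sum_range_of_antitone {lam b : ℕ → ℝ} (hlam : Antitone lam) {n N : ℕ}
    (hlam_n : 0 ≤ lam n) (hb0 : ∀ l, 0 ≤ b l) (hb1 : ∀ l, b l ≤ 1)
    (hbN : ∑ l ∈ range N, b l ≤ n) :
    ∑ l ∈ range N, lam l * b l ≤ ∑ l ∈ range n, lam l := by
  -- split `lam l = (lam l - lam n) + lam n`; the first part is positive only for `l < n`
  set t : ℕ → ℝ := fun l => if l < n then lam l - lam n else 0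
  have ht : ∀ l, 0 ≤ t l := fun l => by
    by_cases h : l < n
    · simpa [t, h] using hlam h.le
    · simp [t, h]
  have hterm : ∀ l, (lam l - lam n) * b l ≤ t l := fun l => by
    by_cases h : l < n
    · simpa [t, h] using mul_le_of_le_one_right (sub_nonneg.2 (hlam h.le)) (hb1 l)
    · simpa [t, h] using mul_nonpos_of_nonpos_of_nonneg
        (sub_nonpos.2 (hlam (not_lt.1 h))) (hb0 l)
  have hsum_t : ∑ l ∈ range N, t l ≤ ∑ l ∈ range n, (lam l - lam n) := calc
    ∑ l ∈ range N, t l ≤ ∑ l ∈ range (max N n), t l :=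
      sum_le_sum_of_subset_of_nonneg (range_subset_range.2 (le_max_left _ _)) fun l _ _ => ht l
    _ = ∑ l ∈ range n, t l :=
      (sum_subset (range_subset_range.2 (le_max_right _ _)) fun l _ hl =>
        if_neg (by simpa using hl)).symm
    _ = ∑ l ∈ range n, (lam l - lam n) := sum_congr rfl fun l hl => if_pos (mem_range.1 hl)
  calc ∑ l ∈ range N, lam l * b l
      = ∑ l ∈ range N, (lam l - lam n) * b l + lam n * ∑ l ∈ range N, b l := by
        rw [mul_sum, ← sum_add_distrib]
        exact sum_congr rfl fun l _ => by ring
    _ ≤ ∑ l ∈ range n, (lam l - lam n) + lam n * n :=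
        add_le_add ((sum_le_sum fun l _ => hterm l).trans hsum_t)
          (mul_le_mul_of_nonneg_left hbN hlam_n)
    _ = ∑ l ∈ range n, lam l := by
        rw [sum_sub_distrib, sum_const, card_range, nsmul_eq_mul]; ring

section InnerProductSpace

variable {H : Type*} [NormedAddCommGroup H] [InnerProductSpace ℝ H]

lemma norm_le_of_inner_eq_norm_sq {x y : H} (h : ⟪x, y⟫ = ‖y‖ ^ 2) : ‖y‖ ≤ ‖x‖ := by
  rcases (norm_nonneg y).eq_or_lt with hy | hy
  · exact hy ▸ norm_nonneg x
  · refine le_of_mul_le_mul_right ?_ hy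
    rw [← sq, ← h]
    exact real_inner_le_norm x y

lemma tendsto_of_inner_eq_norm_sq {α : Type*} {l : Filter α} {x : H} {y : α → H}
    (h : ∀ i, ⟪x, y i⟫ = ‖y i‖ ^ 2) (hy : Tendsto (fun i => ‖y i‖ ^ 2) l (𝓝 (‖x‖ ^ 2))) :
    Tendsto y l (𝓝 x) := by
  have hsq : Tendsto (fun i => ‖x - y i‖ ^ 2) l (𝓝 0) := by
    have hdiff : ∀ i, ‖x - y i‖ ^ 2 = ‖x‖ ^ 2 - ‖y i‖ ^ 2 := fun i => by
      rw [norm_sub_sq_real, h]; ring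
    have hlim := hy.const_sub (‖x‖ ^ 2)
    rw [sub_self] at hlim
    simpa only [hdiff] using hlim
  rw [tendsto_iff_norm_sub_tendsto_zero]
  simpa [norm_sub_rev, Real.sqrt_sq (norm_nonneg _)] using hsq.sqrt

variable {ι : Type*} {g : ι → H}

lemma inner_sum_smul_sum_smul_of_pairwise (hg : Pairwise fun l m => ⟪g l, g m⟫ = 0)
    (s : Finset ι) (c d : ι → ℝ) :
    ⟪∑ l ∈ s, c l • g l, ∑ l ∈ s, d l • g l⟫ = ∑ l ∈ s, c l * d l * ‖g l‖ ^ 2 := by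
  simp_rw [sum_inner, inner_sum, real_inner_smul_left, real_inner_smul_right]
  refine sum_congr rfl fun l hl => ?_
  rw [sum_eq_single_of_mem l hl fun m _ hml => by rw [hg hml.symm, mul_zero, mul_zero],
    real_inner_self_eq_norm_sq]
  ring

lemma sum_inner_sq_div_norm_sq_le (hg : Pairwise fun l m => ⟪g l, g m⟫ = 0) (x : H)
    (s : Finset ι) : ∑ l ∈ s, ⟪x, g l⟫ ^ 2 / ‖g l‖ ^ 2 ≤ ‖x‖ ^ 2 := by
  set y := ∑ l ∈ s, (⟪x, g l⟫ / ‖g l‖ ^ 2) • g l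
  have hxy : ⟪x, y⟫ = ∑ l ∈ s, ⟪x, g l⟫ ^ 2 / ‖g l‖ ^ 2 := by
    simp only [y, inner_sum, real_inner_smul_right]
    exact sum_congr rfl fun l _ => by ring
  have hyy : ‖y‖ ^ 2 = ∑ l ∈ s, ⟪x, g l⟫ ^ 2 / ‖g l‖ ^ 2 := by
    rw [← real_inner_self_eq_norm_sq, inner_sum_smul_sum_smul_of_pairwise hg]
    refine sum_congr rfl fun l _ => ?_
    rcases eq_or_ne (‖g l‖ ^ 2) 0 with h | h
    · simp [h]
    · field_simp
  rw [← hyy]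
  exact pow_le_pow_left₀ (norm_nonneg _) (norm_le_of_inner_eq_norm_sq (hxy.trans hyy.symm)) 2

lemma inner_sum_smul_eq_norm_sq_of_pairwise (hg : Pairwise fun l m => ⟪g l, g m⟫ = 0)
    {v : H} {a : ι → ℝ} (hv : ∀ l, ⟪v, g l⟫ = a l * ‖g l‖ ^ 2) (s : Finset ι) :
    ⟪v, ∑ l ∈ s, a l • g l⟫ = ‖∑ l ∈ s, a l • g l‖ ^ 2 := by
  rw [← real_inner_self_eq_norm_sq, inner_sum_smul_sum_smul_of_pairwise hg, inner_sum]
  exact sum_congr rfl fun l _ => by rw [real_inner_smul_right, hv]; ring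

lemma sum_sum_inner_sq_le_sum_range_norm_sq {ι : Type*} [Fintype ι] {e : ι → H}
    (he : Orthonormal ℝ e) {g : ℕ → H} (hg : Pairwise fun l m => ⟪g l, g m⟫ = 0)
    (hanti : Antitone fun l => ‖g l‖ ^ 2) (N : ℕ) :
    ∑ i, ∑ l ∈ range N, ⟪e i, g l⟫ ^ 2 ≤ ∑ l ∈ range (Fintype.card ι), ‖g l‖ ^ 2 := by
  set b : ℕ → ℝ := fun l => (∑ i, ⟪e i, g l⟫ ^ 2) / ‖g l‖ ^ 2
  have hbessel : ∀ l, ∑ i, ⟪e i, g l⟫ ^ 2 ≤ ‖g l‖ ^ 2 := fun l => by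
    simpa [real_inner_comm] using he.sum_inner_products_le (g l) (s := univ)
  have hb : ∀ l, ‖g l‖ ^ 2 * b l = ∑ i, ⟪e i, g l⟫ ^ 2 := fun l => by
    rcases eq_or_ne (‖g l‖ ^ 2) 0 with h | h
    · simp [norm_eq_zero.1 (pow_eq_zero_iff two_ne_zero |>.1 h)]
    · exact mul_div_cancel₀ _ h
  have hb1 : ∀ l, b l ≤ 1 := fun l => div_le_one_of_le₀ (hbessel l) (sq_nonneg _)
  have hbN : ∑ l ∈ range N, b l ≤ Fintype.card ι := calc
    ∑ l ∈ range N, b l = ∑ i, ∑ l ∈ range N, ⟪e i, g l⟫ ^ 2 / ‖g l‖ ^ 2 := by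
      simp only [b, sum_div]; exact sum_comm
    _ ≤ ∑ i : ι, ‖e i‖ ^ 2 := sum_le_sum fun i _ => sum_inner_sq_div_norm_sq_le hg (e i) _
    _ = Fintype.card ι := by simp [he.1]
  calc ∑ i, ∑ l ∈ range N, ⟪e i, g l⟫ ^ 2 = ∑ l ∈ range N, ‖g l‖ ^ 2 * b l := by
        rw [sum_comm]; simp only [hb]
    _ ≤ _ := sum_range_mul_le_sum_range_of_antitone hanti (sq_nonneg _)
        (fun l => by positivity) hb1 hbN

end InnerProductSpace

lemma integral_sq_sum_mul_eq_sum_sq {X : Type*} [MeasurableSpace X] {ρ : Measure X}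
    {ι : Type*} [DecidableEq ι] {ψ : ι → X → ℝ}
    (hint : ∀ i j, Integrable (fun x => ψ i x * ψ j x) ρ)
    (horth : ∀ i j, ∫ x, ψ i x * ψ j x ∂ρ = if i = j then 1 else 0) (s : Finset ι) (c : ι → ℝ) :
    ∫ x, (∑ l ∈ s, c l * ψ l x) ^ 2 ∂ρ = ∑ l ∈ s, c l ^ 2 := calc
  ∫ x, (∑ l ∈ s, c l * ψ l x) ^ 2 ∂ρ
      = ∫ x, ∑ l ∈ s, ∑ m ∈ s, c l * c m * (ψ l x * ψ m x) ∂ρ := by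
        simp_rw [sq, sum_mul_sum]
        exact integral_congr_ae (.of_forall fun x => sum_congr rfl fun l _ =>
          sum_congr rfl fun m _ => by ring)
  _ = ∑ l ∈ s, ∑ m ∈ s, c l * c m * (if l = m then 1 else 0) := by
        rw [integral_finsetSum _ fun l _ => integrable_finsetSum _ fun m _ =>
          (hint l m).const_mul _]
        refine sum_congr rfl fun l _ => ?_
        rw [integral_finsetSum _ fun m _ => (hint l m).const_mul _]
        simp_rw [integral_const_mul, horth]
  _ = ∑ l ∈ s, c l ^ 2 := by simp [sq]

lemma Continuous.integrable_of_compactSpace {X E : Type*} [TopologicalSpace X] [CompactSpace X]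
    [MeasurableSpace X] [OpensMeasurableSpace X] [NormedAddCommGroup E] {ρ : Measure X}
    [IsFiniteMeasure ρ] {f : X → E} (hf : Continuous f) : Integrable f ρ :=
  hf.integrable_of_hasCompactSupport (.of_compactSpace f)

section FeatureAdjoint

variable {X : Type*} [MeasurableSpace X] {H : Type*} [NormedAddCommGroup H]
  [InnerProductSpace ℝ H] [CompleteSpace H]

/-- `S^* f`, for the feature operator `S : H → L²(ρ)`, `S u = ⟪u, Φ ·⟫`. -/
noncomputable def featureAdjoint (ρ : Measure X) (Φ : X → H) (f : X → ℝ) : H :=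
  ∫ x, f x • Φ x ∂ρ

variable {ρ : Measure X} {Φ : X → H}

lemma inner_featureAdjoint {f : X → ℝ} (hf : Integrable (fun x => f x • Φ x) ρ) (u : H) :
    ⟪u, featureAdjoint ρ Φ f⟫ = ∫ x, f x * ⟪u, Φ x⟫ ∂ρ := by
  simp_rw [featureAdjoint, ← integral_inner hf, real_inner_smul_right]

variable [TopologicalSpace X] [CompactSpace X] [OpensMeasurableSpace X] [IsFiniteMeasure ρ]

lemma inner_featureAdjoint_of_eigen (hΦ : Continuous Φ) {f : X → ℝ} (hf : Continuous f) {μ : ℝ}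
    (heig : ∀ x, ∫ y, ⟪Φ x, Φ y⟫ * f y ∂ρ = μ * f x) (x : X) :
    ⟪Φ x, featureAdjoint ρ Φ f⟫ = μ * f x := by
  rw [inner_featureAdjoint (hf.smul hΦ).integrable_of_compactSpace, ← heig]
  simp_rw [mul_comm]

lemma inner_featureAdjoint_featureAdjoint_of_eigen (hΦ : Continuous Φ) {f g : X → ℝ}
    (hf : Continuous f) (hg : Continuous g) {μ : ℝ}
    (heig : ∀ x, ∫ y, ⟪Φ x, Φ y⟫ * g y ∂ρ = μ * g x) :
    ⟪featureAdjoint ρ Φ f, featureAdjoint ρ Φ g⟫ = μ * ∫ x, f x * g x ∂ρ := by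
  rw [real_inner_comm, inner_featureAdjoint (hf.smul hΦ).integrable_of_compactSpace,
    ← integral_const_mul]
  exact integral_congr_ae (.of_forall fun x => by
    beta_reduce; rw [real_inner_comm, inner_featureAdjoint_of_eigen hΦ hg heig]; ring)

end FeatureAdjoint

section Mercer

variable {X : Type*} [TopologicalSpace X] [CompactSpace X] [MeasurableSpace X]
  [OpensMeasurableSpace X] {ρ : Measure X} [IsFiniteMeasure ρ]
  {H : Type*} [NormedAddCommGroup H] [InnerProductSpace ℝ H] [CompleteSpace H]
  {Φ : X → H} {lam : ℕ → ℝ} {ψ : ℕ → X → ℝ}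

lemma inner_featureAdjoint_eigenfunctions (hΦ : Continuous Φ) (hψ : ∀ i, Continuous (ψ i))
    (horth : ∀ i j, ∫ x, ψ i x * ψ j x ∂ρ = if i = j then 1 else 0)
    (heig : ∀ i x, ∫ y, ⟪Φ x, Φ y⟫ * ψ i y ∂ρ = lam i * ψ i x) (l m : ℕ) :
    ⟪featureAdjoint ρ Φ (ψ l), featureAdjoint ρ Φ (ψ m)⟫ = if l = m then lam l else 0 := by
  rw [inner_featureAdjoint_featureAdjoint_of_eigen hΦ (hψ l) (hψ m) (heig m), horth]
  split_ifs with h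
  · rw [h, mul_one]
  · rw [mul_zero]

lemma pairwise_inner_featureAdjoint_eigenfunctions (hΦ : Continuous Φ)
    (hψ : ∀ i, Continuous (ψ i)) (horth : ∀ i j, ∫ x, ψ i x * ψ j x ∂ρ = if i = j then 1 else 0)
    (heig : ∀ i x, ∫ y, ⟪Φ x, Φ y⟫ * ψ i y ∂ρ = lam i * ψ i x) :
    Pairwise fun l m => ⟪featureAdjoint ρ Φ (ψ l), featureAdjoint ρ Φ (ψ m)⟫ = 0 :=
  fun l m h => (inner_featureAdjoint_eigenfunctions hΦ hψ horth heig l m).trans (if_neg h)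

lemma norm_sq_featureAdjoint_eigenfunction (hΦ : Continuous Φ) (hψ : ∀ i, Continuous (ψ i))
    (horth : ∀ i j, ∫ x, ψ i x * ψ j x ∂ρ = if i = j then 1 else 0)
    (heig : ∀ i x, ∫ y, ⟪Φ x, Φ y⟫ * ψ i y ∂ρ = lam i * ψ i x) (l : ℕ) :
    ‖featureAdjoint ρ Φ (ψ l)‖ ^ 2 = lam l := by
  rw [← real_inner_self_eq_norm_sq, inner_featureAdjoint_eigenfunctions hΦ hψ horth heig,
    if_pos rfl]

lemma inner_sum_smul_featureAdjoint_eq_norm_sq (hΦ : Continuous Φ) (hψ : ∀ i, Continuous (ψ i))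
    (horth : ∀ i j, ∫ x, ψ i x * ψ j x ∂ρ = if i = j then 1 else 0)
    (heig : ∀ i x, ∫ y, ⟪Φ x, Φ y⟫ * ψ i y ∂ρ = lam i * ψ i x) (x : X) (s : Finset ℕ) :
    ⟪Φ x, ∑ l ∈ s, ψ l x • featureAdjoint ρ Φ (ψ l)⟫ =
      ‖∑ l ∈ s, ψ l x • featureAdjoint ρ Φ (ψ l)‖ ^ 2 := by
  refine inner_sum_smul_eq_norm_sq_of_pairwise
    (pairwise_inner_featureAdjoint_eigenfunctions hΦ hψ horth heig) (fun l => ?_) s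
  rw [inner_featureAdjoint_of_eigen hΦ (hψ l) (heig l),
    norm_sq_featureAdjoint_eigenfunction hΦ hψ horth heig, mul_comm]

lemma tendsto_sum_smul_featureAdjoint (hΦ : Continuous Φ) (hψ : ∀ i, Continuous (ψ i))
    (horth : ∀ i j, ∫ x, ψ i x * ψ j x ∂ρ = if i = j then 1 else 0)
    (heig : ∀ i x, ∫ y, ⟪Φ x, Φ y⟫ * ψ i y ∂ρ = lam i * ψ i x)
    (hmercer : ∀ x y, HasSum (fun i => lam i * ψ i x * ψ i y) ⟪Φ x, Φ y⟫) (x : X) :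
    Tendsto (fun N => ∑ l ∈ range N, ψ l x • featureAdjoint ρ Φ (ψ l)) atTop (𝓝 (Φ x)) := by
  have hS := inner_sum_smul_featureAdjoint_eq_norm_sq hΦ hψ horth heig x
  refine tendsto_of_inner_eq_norm_sq (fun N => hS _) ?_
  have hpartial : ∀ N, ‖∑ l ∈ range N, ψ l x • featureAdjoint ρ Φ (ψ l)‖ ^ 2 =
      ∑ l ∈ range N, lam l * ψ l x * ψ l x := fun N => by
    rw [← hS, inner_sum]
    exact sum_congr rfl fun l _ => by
      rw [real_inner_smul_right, inner_featureAdjoint_of_eigen hΦ (hψ l) (heig l)]; ring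
  simpa only [hpartial, real_inner_self_eq_norm_sq] using (hmercer x x).tendsto_sum_nat

theorem hasSum_inner_featureAdjoint_sq (hΦ : Continuous Φ) (hψ : ∀ i, Continuous (ψ i))
    (horth : ∀ i j, ∫ x, ψ i x * ψ j x ∂ρ = if i = j then 1 else 0)
    (heig : ∀ i x, ∫ y, ⟪Φ x, Φ y⟫ * ψ i y ∂ρ = lam i * ψ i x)
    (hmercer : ∀ x y, HasSum (fun i => lam i * ψ i x * ψ i y) ⟪Φ x, Φ y⟫) (u : H) :
    HasSum (fun l => ⟪u, featureAdjoint ρ Φ (ψ l)⟫ ^ 2) (∫ x, ⟪u, Φ x⟫ ^ 2 ∂ρ) := by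
  set S : ℕ → X → H := fun N x => ∑ l ∈ range N, ψ l x • featureAdjoint ρ Φ (ψ l)
  have hcoeff : ∀ N, ∫ x, ⟪u, S N x⟫ ^ 2 ∂ρ = ∑ l ∈ range N, ⟪u, featureAdjoint ρ Φ (ψ l)⟫ ^ 2 :=
    fun N => by
      simp_rw [S, inner_sum, real_inner_smul_right, mul_comm (ψ _ _)]
      exact integral_sq_sum_mul_eq_sum_sq
        (fun i j => ((hψ i).mul (hψ j)).integrable_of_compactSpace) horth _ _
  have hbound : ∀ N x, ‖⟪u, S N x⟫ ^ 2‖ ≤ ‖u‖ ^ 2 * ‖Φ x‖ ^ 2 := fun N x => by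
    have hS : ‖S N x‖ ≤ ‖Φ x‖ := norm_le_of_inner_eq_norm_sq
      (inner_sum_smul_featureAdjoint_eq_norm_sq hΦ hψ horth heig x _)
    rw [norm_pow, ← mul_pow]
    exact pow_le_pow_left₀ (norm_nonneg _)
      ((norm_inner_le_norm u _).trans (mul_le_mul_of_nonneg_left hS (norm_nonneg u))) 2
  rw [hasSum_iff_tendsto_nat_of_nonneg (fun _ => sq_nonneg _)]
  simp_rw [← hcoeff]
  refine tendsto_integral_of_dominated_convergence _ (fun N => ?_)
    (continuous_const.mul (hΦ.norm.pow 2)).integrable_of_compactSpace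
    (fun N => .of_forall (hbound N)) (.of_forall fun x => ?_)
  · exact ((continuous_const.inner (continuous_finsetSum _ fun l _ =>
      (hψ l).smul continuous_const)).pow 2).aestronglyMeasurable
  · exact ((tendsto_const_nhds.inner
      (tendsto_sum_smul_featureAdjoint hΦ hψ horth heig hmercer x)).pow 2)

end Mercer

theorem orthonormal_mass_le_eigenvalue_sum_general
    {X : Type*} [MetricSpace X] [CompactSpace X] [MeasurableSpace X] [BorelSpace X]
    (ρ : Measure X) [IsProbabilityMeasure ρ]
    {H : Type*} [NormedAddCommGroup H] [InnerProductSpace ℝ H] [CompleteSpace H]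
    (Φ : X → H) (hΦc : Continuous Φ)
    (lam : ℕ → ℝ) (hlam_anti : Antitone lam)
    (ψ : ℕ → X → ℝ) (hψc : ∀ i, Continuous (ψ i))
    (horth : ∀ i j, ∫ x, ψ i x * ψ j x ∂ρ = if i = j then 1 else 0)
    (heig : ∀ i x, ∫ y, ⟪Φ x, Φ y⟫ * ψ i y ∂ρ = lam i * ψ i x)
    (hmercer : ∀ x y, HasSum (fun i => lam i * ψ i x * ψ i y) ⟪Φ x, Φ y⟫)
    (n : ℕ) (e : Fin n → H) (he : Orthonormal ℝ e) :
    ∑ i, ∫ x, ⟪e i, Φ x⟫ ^ 2 ∂ρ ≤ ∑ l ∈ Finset.range n, lam l := by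
  have hnorm := norm_sq_featureAdjoint_eigenfunction hΦc hψc horth heig
  have hmass : ∀ i, Tendsto (fun N => ∑ l ∈ range N, ⟪e i, featureAdjoint ρ Φ (ψ l)⟫ ^ 2)
      atTop (𝓝 (∫ x, ⟪e i, Φ x⟫ ^ 2 ∂ρ)) := fun i =>
    (hasSum_inner_featureAdjoint_sq hΦc hψc horth heig hmercer (e i)).tendsto_sum_nat
  refine le_of_tendsto' (tendsto_finsetSum _ fun i _ => hmass i) fun N => ?_
  simpa only [Fintype.card_fin, hnorm] using
    sum_sum_inner_sq_le_sum_range_norm_sq (g := fun l => featureAdjoint ρ Φ (ψ l)) he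
      (pairwise_inner_featureAdjoint_eigenfunctions hΦc hψc horth heig)
      (by simpa only [hnorm] using hlam_anti) N

/-- The total `L²(ρ)`-mass of the functions `x ↦ ⟪e_i, Φ x⟫` associated with any `n`
orthonormal elements of `H` is at most the sum of the `n` largest eigenvalues of the
kernel integral operator. -/
theorem orthonormal_mass_le_eigenvalue_sum
    {X : Type*} [MetricSpace X] [CompactSpace X] [MeasurableSpace X] [BorelSpace X]
    (ρ : Measure X) [IsProbabilityMeasure ρ]
    {H : Type*} [NormedAddCommGroup H] [InnerProductSpace ℝ H] [CompleteSpace H]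
    (Φ : X → H) (hΦc : Continuous Φ) (hΦ : ∀ x, ‖Φ x‖ ≤ 1)
    (lam : ℕ → ℝ) (hlam_anti : Antitone lam) (hlam_nonneg : ∀ i, 0 ≤ lam i)
    (ψ : ℕ → X → ℝ) (hψc : ∀ i, Continuous (ψ i))
    (horth : ∀ i j, ∫ x, ψ i x * ψ j x ∂ρ = if i = j then 1 else 0)
    (heig : ∀ i x, ∫ y, ⟪Φ x, Φ y⟫ * ψ i y ∂ρ = lam i * ψ i x)
    (hmercer : ∀ x y, HasSum (fun i => lam i * ψ i x * ψ i y) ⟪Φ x, Φ y⟫)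
    (n : ℕ) (e : Fin n → H) (he : Orthonormal ℝ e) :
    ∑ i, ∫ x, ⟪e i, Φ x⟫ ^ 2 ∂ρ ≤ ∑ l ∈ Finset.range n, lam l :=
  orthonormal_mass_le_eigenvalue_sum_general ρ Φ hΦc lam hlam_anti ψ hψc horth heig hmercer n e he
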